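/- arXiv:1903.00373 — 3 statements merged into one kernel-verified Lean document; each statement's English description precedes it below -/
import Mathlib

section
/- Define F : ℂ² → ℂ by F(x,z) = x(z² − 2z + x)²/(z² − 2xz + x)². Then F is a rational first integral of the Riccati foliation Ric̃ with slope field dz/dx = z²/(4x(x−1)) + z/(2x) − 1/(4(x−1)) = (z² + 2(x−1)z − x)/(4x(x−1)): for every (x,z) ∈ ℂ² with x ≠ 0, x ≠ 1 and z² − 2xz + x ≠ 0, one has ∂F/∂x (x,z) + ((z² + 2(x−1)z − x)/(4x(x−1)))·∂F/∂z (x,z) = 0. -/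
/-!
The curves `x = 0`, `N := z² − 2z + x = 0` and `D := z² − 2xz + x = 0` are invariant for the
vector field `4x(x−1) ∂ₓ + (z² + 2(x−1)z − x) ∂_z` defining the foliation: it maps `x`, `N`, `D`
to `x`, `N`, `D` times the cofactors `4(x−1)`, `2z + 4x − 2`, `2z + 6x − 4`. Since
`4(x−1) + 2(2z + 4x − 2) = 2(2z + 6x − 4)`, the logarithmic derivative of `F = x N² / D²`
along the field vanishes (Darboux).
-/

/-- The first integral of the Riccati foliation `Ric̃`. -/
noncomputable def Fint (x z : ℂ) : ℂ :=
  x * (z ^ 2 - 2 * z + x) ^ 2 / (z ^ 2 - 2 * x * z + x) ^ 2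

section Darboux

variable {𝕜 : Type*} [NontriviallyNormedField 𝕜]

theorem HasDerivAt.mul_sq_div_sq {u v w : 𝕜 → 𝕜} {u' v' w' t : 𝕜}
    (hu : HasDerivAt u u' t) (hv : HasDerivAt v v' t) (hw : HasDerivAt w w' t)
    (hw0 : w t ≠ 0) :
    HasDerivAt (fun t => u t * v t ^ 2 / w t ^ 2)
      (v t / w t ^ 3 * (u' * v t * w t + 2 * u t * v' * w t - 2 * u t * v t * w')) t := by
  refine ((hu.fun_mul (hv.fun_pow 2)).fun_div (hw.fun_pow 2) (pow_ne_zero 2 hw0)).congr_deriv ?_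
  field_simp
  ring

/-- Darboux's first integral built from invariant curves with balanced cofactors. -/
theorem deriv_mul_sq_div_sq_along_slope_eq_zero {u v w : 𝕜 → 𝕜 → 𝕜}
    {x z s a b c ux uz vx vz wx wz : 𝕜}
    (hux : HasDerivAt (u · z) ux x) (huz : HasDerivAt (u x ·) uz z)
    (hvx : HasDerivAt (v · z) vx x) (hvz : HasDerivAt (v x ·) vz z)
    (hwx : HasDerivAt (w · z) wx x) (hwz : HasDerivAt (w x ·) wz z) (hw0 : w x z ≠ 0)
    (hu : ux + s * uz = a * u x z) (hv : vx + s * vz = b * v x z)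
    (hw : wx + s * wz = c * w x z) (habc : a + 2 * b = 2 * c) :
    deriv (fun x' => u x' z * v x' z ^ 2 / w x' z ^ 2) x
      + s * deriv (fun z' => u x z' * v x z' ^ 2 / w x z' ^ 2) z = 0 := by
  rw [(hux.mul_sq_div_sq hvx hwx hw0).deriv, (huz.mul_sq_div_sq hvz hwz hw0).deriv]
  linear_combination v x z / w x z ^ 3 * (v x z * w x z * hu + 2 * u x z * w x z * hv
    - 2 * u x z * v x z * hw + u x z * v x z * w x z * habc)

end Darboux

noncomputable def riccatiSlope (x z : ℂ) : ℂ :=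
  (z ^ 2 + 2 * (x - 1) * z - x) / (4 * x * (x - 1))

section Riccati

variable {x : ℂ} (z : ℂ)

theorem riccatiSlope_eq (hx0 : x ≠ 0) (hx1 : x ≠ 1) :
    z ^ 2 / (4 * x * (x - 1)) + z / (2 * x) - 1 / (4 * (x - 1)) = riccatiSlope x z := by
  have := sub_ne_zero.mpr hx1
  unfold riccatiSlope
  field_simp
  ring

theorem riccatiSlope_invariant_num (hx0 : x ≠ 0) (hx1 : x ≠ 1) :
    1 + riccatiSlope x z * (2 * z - 2) =
      (2 * z + 4 * x - 2) / (4 * x * (x - 1)) * (z ^ 2 - 2 * z + x) := by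
  have := sub_ne_zero.mpr hx1
  unfold riccatiSlope
  field_simp
  ring

theorem riccatiSlope_invariant_den (hx0 : x ≠ 0) (hx1 : x ≠ 1) :
    1 - 2 * z + riccatiSlope x z * (2 * z - 2 * x) =
      (2 * z + 6 * x - 4) / (4 * x * (x - 1)) * (z ^ 2 - 2 * x * z + x) := by
  have := sub_ne_zero.mpr hx1
  unfold riccatiSlope
  field_simp
  ring

theorem riccati_cofactors_balance (hx0 : x ≠ 0) (hx1 : x ≠ 1) :
    1 / x + 2 * ((2 * z + 4 * x - 2) / (4 * x * (x - 1))) =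
      2 * ((2 * z + 6 * x - 4) / (4 * x * (x - 1))) := by
  have := sub_ne_zero.mpr hx1
  field_simp
  ring

end Riccati

/-- `F(x,z) = x(z² − 2z + x)²/(z² − 2xz + x)²` is a rational first integral of the
Riccati foliation with slope field
`dz/dx = z²/(4x(x−1)) + z/(2x) − 1/(4(x−1)) = (z² + 2(x−1)z − x)/(4x(x−1))`:
for every `(x,z)` with `x ≠ 0`, `x ≠ 1` and `z² − 2xz + x ≠ 0` one has
`∂F/∂x + slope · ∂F/∂z = 0`. -/
theorem first_integral_of_riccati (x z : ℂ) (hx0 : x ≠ 0) (hx1 : x ≠ 1)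
    (hden : z ^ 2 - 2 * x * z + x ≠ 0) :
    z ^ 2 / (4 * x * (x - 1)) + z / (2 * x) - 1 / (4 * (x - 1))
      = (z ^ 2 + 2 * (x - 1) * z - x) / (4 * x * (x - 1)) ∧
    deriv (fun x' => Fint x' z) x
      + (z ^ 2 + 2 * (x - 1) * z - x) / (4 * x * (x - 1))
        * deriv (fun z' => Fint x z') z = 0 := by
  refine ⟨riccatiSlope_eq z hx0 hx1, ?_⟩
  have hNx : HasDerivAt (fun x' => z ^ 2 - 2 * z + x') 1 x := (hasDerivAt_id x).const_add _
  have hNz : HasDerivAt (fun z' => z' ^ 2 - 2 * z' + x) (2 * z - 2) z :=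
    (((hasDerivAt_pow 2 z).fun_sub ((hasDerivAt_id z).const_mul 2)).add_const x).congr_deriv
      (by ring)
  have hDx : HasDerivAt (fun x' => z ^ 2 - 2 * x' * z + x') (1 - 2 * z) x :=
    ((((hasDerivAt_id' x).const_mul 2).mul_const z).const_sub (z ^ 2)).fun_add
      (hasDerivAt_id' x) |>.congr_deriv (by ring)
  have hDz : HasDerivAt (fun z' => z' ^ 2 - 2 * x * z' + x) (2 * z - 2 * x) z :=
    (((hasDerivAt_pow 2 z).fun_sub ((hasDerivAt_id z).const_mul (2 * x))).add_const x).congr_deriv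
      (by ring)
  have hx : 1 + riccatiSlope x z * 0 = 1 / x * x := by
    rw [mul_zero, add_zero, one_div_mul_cancel hx0]
  exact deriv_mul_sq_div_sq_along_slope_eq_zero (u := fun x _ => x)
    (v := fun x z => z ^ 2 - 2 * z + x) (w := fun x z => z ^ 2 - 2 * x * z + x)
    (hasDerivAt_id' x) (hasDerivAt_const z x) hNx hNz hDx hDz hden hx
    (riccatiSlope_invariant_num z hx0 hx1) (riccatiSlope_invariant_den z hx0 hx1)
    (riccati_cofactors_balance z hx0 hx1)
end

section
/- Let t ∈ ℂ with t ≠ 0 and t ≠ 1. Let (x₀, y₀) and (u, v) be points of ℂ² satisfying y₀² = x₀(x₀−1)(x₀−t) and v² = u(u−1)(u−t) (affine points of the elliptic curve C), with y₀ ≠ 0 and x₀ ≠ u, and set z = (1−x₀)(y₀u − x₀v)/(y₀(u − x₀)) (the value at (u,v) of the minimal section through (x₀,y₀)). Then x₀ satisfies the quadratic equation (★): (u−z)²x₀² + (−(t+u)z² + 2u(t+1)z − u(t+u))x₀ + tu(z−1)² = 0. -/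
/-!
Clearing the denominator of `z` makes the relation linear in `v`:
`x₀(1−x₀)v = y₀((1−x₀)u − z(u−x₀))`. Squaring it and substituting both curve equations
eliminates `v` and `y₀`, leaving a cubic relation in `x₀`; this cubic vanishes at `x₀ = u`
and its other factor is the quadratic (★).
-/

section

variable {R : Type*} [CommRing R]

def sectionQuadratic (t u z x : R) : R :=
  (u - z) ^ 2 * x ^ 2 + (-(t + u) * z ^ 2 + 2 * u * (t + 1) * z - u * (t + u)) * x
    + t * u * (z - 1) ^ 2

theorem sub_mul_sectionQuadratic (t u z x : R) :
    (x - u) * sectionQuadratic t u z x =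
      (x - t) * ((1 - x) * u - z * (u - x)) ^ 2 - x * (x - 1) * (u * (u - 1) * (u - t)) := by
  unfold sectionQuadratic
  ring

theorem mul_sub_one_mul_eq_of_mul_eq [IsDomain R] {t x y u v w : R}
    (hP : y ^ 2 = x * (x - 1) * (x - t)) (hQ : v ^ 2 = u * (u - 1) * (u - t)) (hy : y ≠ 0)
    (hw : x * (1 - x) * v = y * w) :
    x * (x - 1) * (u * (u - 1) * (u - t)) = (x - t) * w ^ 2 := by
  have hx : x * (x - 1) ≠ 0 := fun h ↦ hy <| pow_eq_zero_iff two_ne_zero |>.mp <| by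
    rw [hP, h, zero_mul]
  refine mul_left_cancel₀ hx ?_
  linear_combination (x * (1 - x) * v + y * w) * hw - (x * (x - 1)) ^ 2 * hQ + w ^ 2 * hP

end

theorem minimal_section_quadratic_general (t : ℂ)
    (x₀ y₀ u v : ℂ) (hP : y₀ ^ 2 = x₀ * (x₀ - 1) * (x₀ - t))
    (hQ : v ^ 2 = u * (u - 1) * (u - t)) (hy₀ : y₀ ≠ 0) (hx₀u : x₀ ≠ u)
    (z : ℂ) (hz : z = (1 - x₀) * (y₀ * u - x₀ * v) / (y₀ * (u - x₀))) :
    (u - z) ^ 2 * x₀ ^ 2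
      + (-(t + u) * z ^ 2 + 2 * u * (t + 1) * z - u * (t + u)) * x₀
      + t * u * (z - 1) ^ 2 = 0 := by
  have hu : u - x₀ ≠ 0 := sub_ne_zero.mpr hx₀u.symm
  have hw : x₀ * (1 - x₀) * v = y₀ * ((1 - x₀) * u - z * (u - x₀)) := by
    rw [hz]
    field_simp
    ring
  have hcubic := sub_mul_sectionQuadratic t u z x₀
  rw [mul_sub_one_mul_eq_of_mul_eq hP hQ hy₀ hw, sub_self] at hcubic
  exact (mul_eq_zero.mp hcubic).resolve_left (sub_ne_zero.mpr hx₀u)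

/-- Let `(x₀,y₀)` and `(u,v)` be affine points of the elliptic curve
`y² = x(x−1)(x−t)` with `y₀ ≠ 0` and `x₀ ≠ u`, and let
`z = (1−x₀)(y₀u − x₀v)/(y₀(u − x₀))` be the value at `(u,v)` of the minimal section
through `(x₀,y₀)`. Then `x₀` satisfies the quadratic equation
`(★): (u−z)²x₀² + (−(t+u)z² + 2u(t+1)z − u(t+u))x₀ + tu(z−1)² = 0`. -/
theorem minimal_section_quadratic (t : ℂ) (ht0 : t ≠ 0) (ht1 : t ≠ 1)
    (x₀ y₀ u v : ℂ) (hP : y₀ ^ 2 = x₀ * (x₀ - 1) * (x₀ - t))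
    (hQ : v ^ 2 = u * (u - 1) * (u - t)) (hy₀ : y₀ ≠ 0) (hx₀u : x₀ ≠ u)
    (z : ℂ) (hz : z = (1 - x₀) * (y₀ * u - x₀ * v) / (y₀ * (u - x₀))) :
    (u - z) ^ 2 * x₀ ^ 2
      + (-(t + u) * z ^ 2 + 2 * u * (t + 1) * z - u * (t + u)) * x₀
      + t * u * (z - 1) ^ 2 = 0 :=
  minimal_section_quadratic_general t x₀ y₀ u v hP hQ hy₀ hx₀u z hz
end

section
/- Let t ∈ ℂ with t ≠ 0 and t ≠ 1, let (u,v) ∈ ℂ² satisfy v² = u(u−1)(u−t) with v ≠ 0, and let z ∈ ℂ with z ≠ u. Then the set of points (x₀, y₀) ∈ ℂ² with y₀² = x₀(x₀−1)(x₀−t), y₀ ≠ 0, x₀ ≠ u and z = (1−x₀)(y₀u − x₀v)/(y₀(u − x₀)) has at most two elements. In other words, at most two minimal sections of S₁ pass through any given point of C × ℙ¹ off the fiber direction, so the minimal sections define a (singular holomorphic) 2-web. -/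
/-!
Clearing denominators, a point `(x₀, y₀)` of the set satisfies
`y₀ ((u − z) x₀ + u (z − 1)) = x₀ (x₀ − 1) v`, whose right side is nonzero; so `y₀` is
determined by `x₀`. Squaring, substituting the curve equation for `y₀²` and cancelling
`x₀ (x₀ − 1)` shows that `x₀` is a root of the cubic
`(X − t)((u − z) X + u (z − 1))² − X (X − 1) v²`, with leading coefficient `(u − z)² ≠ 0`.
Since `(u − z) u + u (z − 1) = u (u − 1)`, the curve equation at `(u, v)` makes `u` a root,
so at most two values `x₀ ≠ u` remain.
-/

open Polynomial

theorem Polynomial.encard_setOf_isRoot_ne_le {R : Type*} [CommRing R] [IsDomain R]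
    {p : R[X]} (hp : p ≠ 0) {a : R} (ha : p.IsRoot a) {n : ℕ} (hdeg : p.natDegree ≤ n + 1) :
    {x | x ≠ a ∧ p.IsRoot x}.encard ≤ n := by
  classical
  have hS : {x | x ≠ a ∧ p.IsRoot x} = ↑(p.roots.toFinset.erase a) := by
    ext x; simp [hp, and_comm]
  have hcard := Finset.card_erase_add_one (Multiset.mem_toFinset.2 ((mem_roots hp).2 ha))
  rw [hS, Set.encard_coe_eq_coe_finsetCard]
  have hroots := (Multiset.toFinset_card_le p.roots).trans (card_roots' p)
  exact_mod_cast (by omega : (p.roots.toFinset.erase a).card ≤ n)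

section MinimalSections

variable {K : Type*} [Field K] {t u v z : K}

def minimalSectionsThrough (t u v z : K) : Set (K × K) :=
  {p | p.2 ^ 2 = p.1 * (p.1 - 1) * (p.1 - t) ∧ p.2 ≠ 0 ∧ p.1 ≠ u ∧
    z = (1 - p.1) * (p.2 * u - p.1 * v) / (p.2 * (u - p.1))}

noncomputable def sectionCubic (t u v z : K) : K[X] :=
  (X - C t) * (C (u - z) * X + C (u * (z - 1))) ^ 2 - X * (X - 1) * C (v ^ 2)

theorem natDegree_sectionCubic (hzu : z ≠ u) : (sectionCubic t u v z).natDegree = 3 := by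
  unfold sectionCubic
  compute_degree!
  exact sub_ne_zero.2 hzu.symm

theorem isRoot_sectionCubic_self (hQ : v ^ 2 = u * (u - 1) * (u - t)) :
    (sectionCubic t u v z).IsRoot u := by
  simp only [sectionCubic, IsRoot, eval_sub, eval_mul, eval_pow, eval_add, eval_X, eval_C, eval_one]
  linear_combination (-u * (u - 1)) * hQ

theorem sectionCubic_ne_zero (hzu : z ≠ u) : sectionCubic t u v z ≠ 0 := fun h => by
  simpa [h] using natDegree_sectionCubic (t := t) (v := v) hzu

namespace minimalSectionsThrough

variable {p : K × K}

theorem fst_mul_fst_sub_one_ne_zero (hp : p ∈ minimalSectionsThrough t u v z) :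
    p.1 * (p.1 - 1) ≠ 0 := by
  intro h
  apply hp.2.1
  simpa [h] using hp.1

theorem snd_mul_eq (hp : p ∈ minimalSectionsThrough t u v z) :
    p.2 * ((u - z) * p.1 + u * (z - 1)) = p.1 * (p.1 - 1) * v := by
  obtain ⟨-, hy, hxu, hz⟩ := hp
  rw [eq_div_iff (mul_ne_zero hy (sub_ne_zero.2 hxu.symm))] at hz
  linear_combination hz

theorem isRoot_sectionCubic_fst (hp : p ∈ minimalSectionsThrough t u v z) :
    (sectionCubic t u v z).IsRoot p.1 := by
  have hx := fst_mul_fst_sub_one_ne_zero hp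
  have hrel := snd_mul_eq hp
  refine (mul_eq_zero.1 ?_).resolve_left hx
  simp only [sectionCubic, eval_sub, eval_mul, eval_pow, eval_add, eval_X, eval_C, eval_one]
  linear_combination (p.2 * ((u - z) * p.1 + u * (z - 1)) + p.1 * (p.1 - 1) * v) * hrel
    - ((u - z) * p.1 + u * (z - 1)) ^ 2 * hp.1

end minimalSectionsThrough

theorem injOn_fst_minimalSectionsThrough (hv : v ≠ 0) :
    Set.InjOn Prod.fst (minimalSectionsThrough t u v z) := by
  rintro ⟨x, y₁⟩ hp₁ ⟨x', y₂⟩ hp₂ (rfl : x = x')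
  have h₁ := minimalSectionsThrough.snd_mul_eq hp₁
  have h₂ := minimalSectionsThrough.snd_mul_eq hp₂
  have hlin : (u - z) * x + u * (z - 1) ≠ 0 := by
    intro h
    rw [h, mul_zero] at h₁
    exact mul_ne_zero (minimalSectionsThrough.fst_mul_fst_sub_one_ne_zero hp₁) hv h₁.symm
  simp only [Prod.mk.injEq, true_and]
  exact mul_right_cancel₀ hlin (h₁.trans h₂.symm)

end MinimalSections

theorem at_most_two_minimal_sections_general (t : ℂ)
    (u v : ℂ) (hQ : v ^ 2 = u * (u - 1) * (u - t)) (hv : v ≠ 0)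
    (z : ℂ) (hzu : z ≠ u) :
    {p : ℂ × ℂ | p.2 ^ 2 = p.1 * (p.1 - 1) * (p.1 - t) ∧ p.2 ≠ 0 ∧ p.1 ≠ u ∧
      z = (1 - p.1) * (p.2 * u - p.1 * v) / (p.2 * (u - p.1))}.encard ≤ 2 := by
  change (minimalSectionsThrough t u v z).encard ≤ 2
  calc (minimalSectionsThrough t u v z).encard
      = (Prod.fst '' minimalSectionsThrough t u v z).encard :=
        ((injOn_fst_minimalSectionsThrough hv).encard_image).symm
    _ ≤ {x | x ≠ u ∧ (sectionCubic t u v z).IsRoot x}.encard :=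
        Set.encard_le_encard <| Set.image_subset_iff.2 fun p hp =>
          ⟨hp.2.2.1, minimalSectionsThrough.isRoot_sectionCubic_fst hp⟩
    _ ≤ 2 :=
        encard_setOf_isRoot_ne_le (sectionCubic_ne_zero hzu) (isRoot_sectionCubic_self hQ)
          (natDegree_sectionCubic hzu).le

/-- At most two minimal sections of `S₁` pass through any given point: for an affine
point `(u,v)` of the elliptic curve `y² = x(x−1)(x−t)` with `v ≠ 0` and any `z ≠ u`,
the set of affine points `(x₀,y₀)` of the curve with `y₀ ≠ 0`, `x₀ ≠ u` whose associated
minimal section `z = (1−x₀)(y₀x − x₀y)/(y₀(x−x₀))` passes through `(u,v,z)` has at most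
two elements; so the minimal sections define a (singular holomorphic) 2-web. -/
theorem at_most_two_minimal_sections (t : ℂ) (ht0 : t ≠ 0) (ht1 : t ≠ 1)
    (u v : ℂ) (hQ : v ^ 2 = u * (u - 1) * (u - t)) (hv : v ≠ 0)
    (z : ℂ) (hzu : z ≠ u) :
    {p : ℂ × ℂ | p.2 ^ 2 = p.1 * (p.1 - 1) * (p.1 - t) ∧ p.2 ≠ 0 ∧ p.1 ≠ u ∧
      z = (1 - p.1) * (p.2 * u - p.1 * v) / (p.2 * (u - p.1))}.encard ≤ 2 :=
  at_most_two_minimal_sections_general t u v hQ hv z hzu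
end
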